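/- ∫_0^{π/4} x·tan x dx = (π/8)·ln 2 − (π/4)·ln 2 + G/2, where G is the Catalan constant. -/

import Mathlib

open Real intervalIntegral

/-- The Catalan constant. -/
noncomputable def catalanConst : ℝ := ∑' r : ℕ, (-1 : ℝ) ^ r / (2 * (r : ℝ) + 1) ^ 2

/-!
Integrating by parts, `∫₀^{π/4} x tan x = (π/8) log 2 + ∫₀^{π/4} log cos`. The reflection
`x ↦ π/2 - x` gives `∫₀^{π/4} (log sin + log cos) = ∫₀^{π/2} log sin = -(π/2) log 2`, while the
substitution `x = arctan t` gives `∫₀^{π/4} (log sin - log cos) = ∫₀^1 log t / (1 + t²)`.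
Expanding `1 / (1 + t²) = ∑ (-t²)ᵏ` and integrating termwise with
`∫₀^1 t^{2k} log t = -1 / (2k+1)²` identifies the last integral with `-G`.
-/

open MeasureTheory Set

lemma hasDerivAt_pow_succ_mul_log (n : ℕ) {t : ℝ} (ht : t ≠ 0) :
    HasDerivAt (fun t ↦ t ^ (n + 1) * log t / (n + 1) - t ^ (n + 1) / (n + 1) ^ 2)
      (t ^ n * log t) t := by
  refine ((((hasDerivAt_pow (n + 1) t).mul (hasDerivAt_log ht)).div_const _).sub
    ((hasDerivAt_pow (n + 1) t).div_const _)).congr_deriv ?_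
  have : (n : ℝ) + 1 ≠ 0 := by positivity
  field_simp
  push_cast
  ring

lemma integral_pow_mul_log_zero_one (n : ℕ) :
    ∫ t in (0:ℝ)..1, t ^ n * log t = -1 / (n + 1) ^ 2 := by
  have hcont : Continuous fun t : ℝ ↦
      t ^ (n + 1) * log t / (n + 1) - t ^ (n + 1) / (n + 1) ^ 2 := by
    simp_rw [pow_succ, mul_assoc]
    have := continuous_mul_log
    fun_prop
  rw [integral_eq_sub_of_hasDeriv_right_of_le zero_le_one hcont.continuousOn
    (fun t ht ↦ (hasDerivAt_pow_succ_mul_log n ht.1.ne').hasDerivWithinAt)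
    (intervalIntegrable_log'.continuousOn_mul (continuous_pow n).continuousOn)]
  norm_num
  ring

lemma summable_one_div_two_mul_add_one_sq :
    Summable fun k : ℕ ↦ 1 / (2 * (k : ℝ) + 1) ^ 2 := by
  refine (summable_nat_add_iff 1 |>.mpr (summable_one_div_nat_pow.mpr one_lt_two))
    |>.of_nonneg_of_le (fun k ↦ by positivity) fun k ↦ ?_
  push_cast
  gcongr
  linarith [(k.cast_nonneg : (0:ℝ) ≤ k)]

lemma hasSum_neg_sq_pow_mul_log {t : ℝ} (ht : t ∈ Ioo (-1) 1) :
    HasSum (fun k : ℕ ↦ (-t ^ 2) ^ k * log t) (log t / (1 + t ^ 2)) := by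
  have hq : ‖-t ^ 2‖ < 1 := by
    rw [norm_neg, norm_pow, Real.norm_eq_abs, sq_abs]
    nlinarith [ht.1, ht.2]
  have h := (hasSum_geometric_of_norm_lt_one hq).mul_right (log t)
  rwa [sub_neg_eq_add, ← div_eq_inv_mul] at h

lemma integral_neg_sq_pow_mul_log (k : ℕ) :
    ∫ t in (0:ℝ)..1, (-t ^ 2) ^ k * log t = -((-1) ^ k / (2 * k + 1) ^ 2) := by
  have h (t : ℝ) : (-t ^ 2) ^ k * log t = (-1) ^ k * (t ^ (2 * k) * log t) := by ring
  simp_rw [h, intervalIntegral.integral_const_mul, integral_pow_mul_log_zero_one]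
  push_cast
  ring

lemma integral_norm_neg_sq_pow_mul_log (k : ℕ) :
    ∫ t in Ioc (0:ℝ) 1, ‖(-t ^ 2) ^ k * log t‖ = 1 / (2 * k + 1) ^ 2 := by
  have h : EqOn (fun t ↦ ‖(-t ^ 2) ^ k * log t‖) (fun t ↦ -(t ^ (2 * k) * log t)) (Ioc 0 1) := by
    intro t ht
    dsimp only
    rw [norm_mul, norm_pow, norm_neg, norm_pow, Real.norm_eq_abs, sq_abs, ← pow_mul,
      Real.norm_of_nonpos (log_nonpos ht.1.le ht.2), mul_neg]
  rw [setIntegral_congr_fun measurableSet_Ioc h, MeasureTheory.integral_neg,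
    ← integral_of_le zero_le_one, integral_pow_mul_log_zero_one]
  push_cast
  ring

lemma integral_log_div_one_add_sq_zero_one :
    ∫ t in (0:ℝ)..1, log t / (1 + t ^ 2) = -catalanConst := by
  have hint (k : ℕ) : Integrable (fun t ↦ (-t ^ 2) ^ k * log t) (volume.restrict (Ioc 0 1)) :=
    (intervalIntegrable_iff_integrableOn_Ioc_of_le zero_le_one).mp <|
      intervalIntegrable_log'.continuousOn_mul (by fun_prop)
  calc ∫ t in (0:ℝ)..1, log t / (1 + t ^ 2)
      = ∫ t in Ioo (0:ℝ) 1, ∑' k : ℕ, (-t ^ 2) ^ k * log t := by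
        rw [integral_of_le zero_le_one, integral_Ioc_eq_integral_Ioo]
        refine setIntegral_congr_fun measurableSet_Ioo fun t ht ↦ ?_
        exact (hasSum_neg_sq_pow_mul_log ⟨by linarith [ht.1], ht.2⟩).tsum_eq.symm
    _ = ∑' k : ℕ, ∫ t in (0:ℝ)..1, (-t ^ 2) ^ k * log t := by
        rw [← integral_Ioc_eq_integral_Ioo, ← integral_tsum_of_summable_integral_norm hint]
        · simp_rw [integral_of_le zero_le_one]
        · simpa only [integral_norm_neg_sq_pow_mul_log] using summable_one_div_two_mul_add_one_sq
    _ = -catalanConst := by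
        simp_rw [integral_neg_sq_pow_mul_log, tsum_neg, catalanConst]

lemma integral_comp_tan {a b : ℝ} (hab : a ≤ b) (g : ℝ → ℝ) :
    ∫ x in arctan a..arctan b, g (tan x) = ∫ t in a..b, g t / (1 + t ^ 2) := by
  have himage : arctan '' Icc a b = Icc (arctan a) (arctan b) :=
    continuous_arctan.continuousOn.image_Icc_of_monotoneOn hab
      (arctan_strictMono.monotone.monotoneOn _)
  rw [integral_of_le hab, integral_of_le (arctan_strictMono.monotone hab),
    ← integral_Icc_eq_integral_Ioc, ← integral_Icc_eq_integral_Ioc, ← himage,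
    integral_image_eq_integral_abs_deriv_smul measurableSet_Icc
      (fun t _ ↦ (hasDerivAt_arctan t).hasDerivWithinAt) arctan_strictMono.injective.injOn]
  refine setIntegral_congr_fun measurableSet_Icc fun t _ ↦ ?_
  rw [abs_of_pos (by positivity), tan_arctan, smul_eq_mul, one_div_mul_eq_div]

lemma integral_log_sin_add_integral_log_cos_zero_pi_div_four :
    (∫ x in (0:ℝ)..π / 4, log (sin x)) + ∫ x in (0:ℝ)..π / 4, log (cos x) = -log 2 * π / 2 := by
  have hcos : ∫ x in (0:ℝ)..π / 4, log (cos x) = ∫ x in π / 4..π / 2, log (sin x) := by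
    simp_rw [← sin_pi_div_two_sub, integral_comp_sub_left (fun x ↦ log (sin x))]
    ring_nf
  have hint {a b : ℝ} : IntervalIntegrable (fun x ↦ log (sin x)) volume a b :=
    intervalIntegrable_log_sin
  rw [hcos, integral_add_adjacent_intervals hint hint, integral_log_sin_zero_pi_div_two]

lemma integral_log_sin_sub_integral_log_cos_zero_pi_div_four :
    (∫ x in (0:ℝ)..π / 4, log (sin x)) - ∫ x in (0:ℝ)..π / 4, log (cos x) = -catalanConst := by
  have hpi : 0 ≤ π / 4 := by positivity
  have htan : EqOn (fun x ↦ log (tan x)) (fun x ↦ log (sin x) - log (cos x)) (uIcc 0 (π / 4)) := by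
    intro x hx
    rw [uIcc_of_le hpi] at hx
    have hcos : 0 < cos x :=
      cos_pos_of_mem_Ioo ⟨by linarith [hx.1, pi_pos], by linarith [hx.2, pi_pos]⟩
    rcases hx.1.eq_or_lt with rfl | hx₀
    · simp -- both sides vanish because `log 0 = 0`
    have hsin : 0 < sin x := sin_pos_of_pos_of_lt_pi hx₀ (by linarith [hx.2, pi_pos])
    simp only [tan_eq_sin_div_cos, log_div hsin.ne' hcos.ne']
  rw [← integral_sub (f := fun x ↦ log (sin x)) (g := fun x ↦ log (cos x))
    intervalIntegrable_log_sin intervalIntegrable_log_cos, ← integral_congr htan,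
    ← integral_log_div_one_add_sq_zero_one]
  simpa only [arctan_zero, arctan_one] using integral_comp_tan zero_le_one log

lemma integral_log_cos_zero_pi_div_four :
    ∫ x in (0:ℝ)..π / 4, log (cos x) = catalanConst / 2 - π / 4 * log 2 := by
  linarith [integral_log_sin_add_integral_log_cos_zero_pi_div_four,
    integral_log_sin_sub_integral_log_cos_zero_pi_div_four]

lemma integral_mul_tan {b : ℝ} (hb : b ∈ Ioo (-(π / 2)) (π / 2)) :
    ∫ x in (0:ℝ)..b, x * tan x = -(b * log (cos b)) + ∫ x in (0:ℝ)..b, log (cos x) := by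
  have h₀ : (0:ℝ) ∈ Ioo (-(π / 2)) (π / 2) := ⟨by linarith [pi_pos], by linarith [pi_pos]⟩
  have hcos : ∀ x ∈ uIcc 0 b, cos x ≠ 0 := fun x hx ↦
    (cos_pos_of_mem_Ioo (ordConnected_Ioo.uIcc_subset h₀ hb hx)).ne'
  have hderiv : ∀ x ∈ uIcc 0 b, HasDerivAt (fun x ↦ -log (cos x)) (tan x) x := by
    intro x hx
    refine ((hasDerivAt_cos x).log (hcos x hx)).neg.congr_deriv ?_
    rw [tan_eq_sin_div_cos]
    ring
  rw [integral_mul_deriv_eq_deriv_mul (fun x _ ↦ hasDerivAt_id' x) hderiv intervalIntegrable_const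
    (continuousOn_tan.mono hcos).intervalIntegrable]
  simp [intervalIntegral.integral_neg]

theorem stmt8 :
    (∫ x in (0:ℝ)..(π/4), x * tan x) =
      (π / 8) * Real.log 2 - (π / 4) * Real.log 2 + catalanConst / 2 := by
  have hπ : π / 4 ∈ Ioo (-(π / 2)) (π / 2) := ⟨by linarith [pi_pos], by linarith [pi_pos]⟩
  have hlog : log (cos (π / 4)) = -(log 2 / 2) := by
    rw [cos_pi_div_four, log_div (by positivity) two_ne_zero, log_sqrt zero_le_two]
    ring
  rw [integral_mul_tan hπ, integral_log_cos_zero_pi_div_four, hlog]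
  ring
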